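/- arXiv:1306.6064 — 4 statements merged into one kernel-verified Lean document; each statement's English description precedes it below -/
import Mathlib

section
/- Let q be a real number with 0 < q < 1, and let z ∈ ℂ satisfy 0 < Re(z) < 1. Then, as d → ∞, |μ_d(q^z + q^{−z}) / μ_d(q + q^{−1})| = O(q^{d(1 − Re(z))}); that is, there exist C > 0 and D ∈ ℕ such that for all d ≥ D, |μ_d(q^z + q^{−z})| ≤ C · q^{d(1 − Re(z))} · μ_d(q + q^{−1}). -/
/-!
Writing `x = t + t⁻¹`, the recursion gives `(t - t⁻¹) μ_d(x) = t^(d+1) - t^(-(d+1))`.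
For `t = q^z` we have `|t| = q^(Re z) < 1`, so `|μ_d(q^z + q^(-z))| = O(q^(-d Re z))`, while
`μ_d(q + q⁻¹) ≥ q^(-d)`; the quotient of the two is `O(q^(d (1 - Re z)))`.
-/

/-- The dilated Chebyshev polynomials of the second kind. -/
def mu {R : Type*} [CommRing R] : ℕ → R → R
  | 0, _ => 1
  | 1, x => x
  | n + 2, x => x * mu (n + 1) x - mu n x

/-- `q^z = exp(z · log q)` for a real `q > 0` and complex `z`. -/
noncomputable def cpw (q : ℝ) (z : ℂ) : ℂ := Complex.exp (z * (Real.log q : ℂ))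

theorem sub_inv_mul_mu_add_inv {K : Type*} [Field K] {t : K} (ht : t ≠ 0) :
    ∀ d : ℕ, (t - t⁻¹) * mu d (t + t⁻¹) = t ^ (d + 1) - t⁻¹ ^ (d + 1)
  | 0 => by simp [mu]
  | 1 => by simp only [mu]; ring
  | n + 2 => by
    have h : t * t⁻¹ = 1 := mul_inv_cancel₀ ht
    simp only [mu]
    linear_combination (t + t⁻¹) * sub_inv_mul_mu_add_inv ht (n + 1) - sub_inv_mul_mu_add_inv ht n
      + (t ^ (n + 1) - t⁻¹ ^ (n + 1)) * h

theorem norm_mu_add_inv_mul_le {K : Type*} [NormedField K] {t : K} (ht : t ≠ 0) (d : ℕ) :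
    ‖mu d (t + t⁻¹)‖ * (‖t‖⁻¹ - ‖t‖) ≤ ‖t‖ ^ (d + 1) + ‖t‖⁻¹ ^ (d + 1) :=
  calc ‖mu d (t + t⁻¹)‖ * (‖t‖⁻¹ - ‖t‖)
      ≤ ‖mu d (t + t⁻¹)‖ * ‖t - t⁻¹‖ := by
        gcongr
        rw [← norm_inv, norm_sub_rev]
        exact norm_sub_norm_le t⁻¹ t
    _ = ‖t ^ (d + 1) - t⁻¹ ^ (d + 1)‖ := by rw [← sub_inv_mul_mu_add_inv ht, norm_mul, mul_comm]
    _ ≤ ‖t‖ ^ (d + 1) + ‖t‖⁻¹ ^ (d + 1) := by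
        simpa only [norm_pow, norm_inv] using norm_sub_le (t ^ (d + 1)) (t⁻¹ ^ (d + 1))

theorem inv_pow_le_mu_add_inv {K : Type*} [Field K] [LinearOrder K] [IsStrictOrderedRing K]
    {q : K} (hq0 : 0 < q) (hq1 : q < 1) (d : ℕ) : q⁻¹ ^ d ≤ mu d (q + q⁻¹) := by
  have hgap : 0 < q⁻¹ - q := sub_pos.2 (hq1.trans (one_lt_inv₀ hq0 |>.2 hq1))
  refine le_of_mul_le_mul_left ?_ hgap
  have hmu : (q⁻¹ - q) * mu d (q + q⁻¹) = q⁻¹ ^ (d + 1) - q ^ (d + 1) := by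
    linear_combination -sub_inv_mul_mu_add_inv hq0.ne' d
  rw [hmu, sub_mul, ← pow_succ']
  have hsmall : q ^ (d + 1) ≤ q * q⁻¹ ^ d :=
    calc q ^ (d + 1) ≤ q := pow_le_of_le_one hq0.le hq1.le (by omega)
      _ ≤ q * q⁻¹ ^ d := le_mul_of_one_le_right hq0.le (one_le_pow₀ (one_le_inv₀ hq0 |>.2 hq1.le))
  linarith

theorem norm_cpw {q : ℝ} (hq : 0 < q) (z : ℂ) : ‖cpw q z‖ = q ^ z.re := by
  rw [cpw, Complex.norm_exp, Real.rpow_def_of_pos hq, mul_comm]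
  simp [Complex.mul_re]

theorem cpw_neg (q : ℝ) (z : ℂ) : cpw q (-z) = (cpw q z)⁻¹ := by
  rw [cpw, cpw, ← Complex.exp_neg, neg_mul]

theorem rpow_mul_one_sub_mul_inv_pow {q : ℝ} (hq : 0 < q) (r : ℝ) (d : ℕ) :
    q ^ ((d : ℝ) * (1 - r)) * q⁻¹ ^ d = (q ^ r)⁻¹ ^ d := by
  rw [← Real.rpow_neg hq.le, ← Real.rpow_mul_natCast hq.le, inv_pow, ← Real.rpow_natCast,
    ← Real.rpow_neg hq.le, ← Real.rpow_add hq]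
  ring_nf

theorem stmt1_general (q : ℝ) (hq0 : 0 < q) (hq1 : q < 1) (z : ℂ)
    (hz0 : 0 < z.re) :
    ∃ C : ℝ, 0 < C ∧ ∃ D : ℕ, ∀ d : ℕ, D ≤ d →
      ‖mu d (cpw q z + cpw q (-z))‖ ≤ C * q ^ ((d : ℝ) * (1 - z.re)) * mu d (q + q⁻¹) := by
  set t := cpw q z
  set a := ‖t‖
  have ht : t ≠ 0 := Complex.exp_ne_zero _
  have ha0 : 0 < a := norm_pos_iff.2 ht
  have ha1 : a < 1 := (norm_cpw hq0 z).trans_lt (Real.rpow_lt_one hq0.le hq1 hz0)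
  have ha_lt : a < a⁻¹ := ha1.trans (one_lt_inv₀ ha0 |>.2 ha1)
  have hgap : 0 < a⁻¹ - a := sub_pos.2 ha_lt
  refine ⟨2 * a⁻¹ / (a⁻¹ - a), by positivity, 0, fun d _ => ?_⟩
  have hpow : a ^ (d + 1) ≤ a⁻¹ ^ (d + 1) := pow_le_pow_left₀ ha0.le ha_lt.le _
  calc ‖mu d (cpw q z + cpw q (-z))‖ = ‖mu d (t + t⁻¹)‖ := by rw [cpw_neg]
    _ ≤ 2 * a⁻¹ ^ (d + 1) / (a⁻¹ - a) :=
        (le_div_iff₀ hgap).2 ((norm_mu_add_inv_mul_le ht d).trans (by linarith))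
    _ = 2 * a⁻¹ / (a⁻¹ - a) * (q ^ ((d : ℝ) * (1 - z.re)) * q⁻¹ ^ d) := by
        rw [rpow_mul_one_sub_mul_inv_pow hq0, ← norm_cpw hq0 z]
        ring
    _ ≤ 2 * a⁻¹ / (a⁻¹ - a) * q ^ ((d : ℝ) * (1 - z.re)) * mu d (q + q⁻¹) := by
        rw [mul_assoc]
        gcongr
        exact inv_pow_le_mu_add_inv hq0 hq1 d

theorem stmt1 (q : ℝ) (hq0 : 0 < q) (hq1 : q < 1) (z : ℂ)
    (hz0 : 0 < z.re) (hz1 : z.re < 1) :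
    ∃ C : ℝ, 0 < C ∧ ∃ D : ℕ, ∀ d : ℕ, D ≤ d →
      ‖mu d (cpw q z + cpw q (-z))‖ ≤ C * q ^ ((d : ℝ) * (1 - z.re)) * mu d (q + q⁻¹) :=
  stmt1_general q hq0 hq1 z hz0
end

section
/- Let q be a real number with 0 < q < 1 and let z ∈ ℂ. Then for every n ≥ 1, (q^z + q^{−z}) · p_n(z) = q^{−1} √(1 − q^{2(n+1)}) · p_{n+1}(z) + q √(1 − q^{2n}) · p_{n−1}(z), and for n = 0, (q^z + q^{−z}) · p_0(z) = q^{−1} √(1 − q^2) · p_1(z). -/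
/-- The q-Pochhammer symbol `(x; q)_k = ∏_{j=0}^{k-1} (1 - x q^j)`. -/
noncomputable def qPoch (x q : ℝ) (k : ℕ) : ℝ := ∏ j ∈ Finset.range k, (1 - x * q ^ j)

/-- The q-binomial coefficient `[n, k]_q = (q; q)_n / ((q; q)_k (q; q)_{n-k})`. -/
noncomputable def qbinom (q : ℝ) (n k : ℕ) : ℝ :=
  qPoch q q n / (qPoch q q k * qPoch q q (n - k))

/-- `p_n(z) = (q^n / √((q²; q²)_n)) · Σ_{k=0}^{n} [n, k]_{q²} · q^{z(n-2k)}`. -/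
noncomputable def pfun (q : ℝ) (n : ℕ) (z : ℂ) : ℂ :=
  ((q ^ n / Real.sqrt (qPoch (q ^ 2) (q ^ 2) n) : ℝ) : ℂ) *
    ∑ k ∈ Finset.range (n + 1),
      (qbinom (q ^ 2) n k : ℂ) * cpw q (z * ((n : ℂ) - 2 * (k : ℂ)))

/-!
Write `x = q^z`, `y = q^{-z}` and `Q = q²`. Up to the normalising factor `q^n / √((Q;Q)_n)`,
`p_n(z)` is the homogeneous form `S_n(x, y) = Σ_k [n, k]_Q x^{n-k} y^k`, which satisfies
`(x + y) S_{n+1} = S_{n+2} + (1 - Q^{n+1}) x y S_n` by the q-Pascal rule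
`[n+1, k+1] + [n+1, k] = [n+2, k+1] + (1 - Q^{n+1}) [n, k]`. Since `x y = 1`, it only remains to
match the normalising factors, which differ by `q⁻¹ √(1 - Q^{n+1})` from one index to the next.
-/

open Finset

lemma qPoch_zero (x q : ℝ) : qPoch x q 0 = 1 := prod_range_zero _

lemma qPoch_succ (x q : ℝ) (k : ℕ) : qPoch x q (k + 1) = qPoch x q k * (1 - x * q ^ k) :=
  prod_range_succ _ _

lemma one_sub_mul_pow_pos {q : ℝ} (hq : |q| < 1) (k : ℕ) : 0 < 1 - q * q ^ k := by
  have := pow_lt_one₀ (abs_nonneg q) hq k.succ_ne_zero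
  rw [← abs_pow, pow_succ'] at this
  linarith [le_abs_self (q * q ^ k)]

lemma qPoch_self_pos {q : ℝ} (hq : |q| < 1) (n : ℕ) : 0 < qPoch q q n := by
  induction n with
  | zero => simp [qPoch_zero]
  | succ n ih => rw [qPoch_succ]; exact mul_pos ih (one_sub_mul_pow_pos hq n)

lemma qbinom_zero_right {q : ℝ} (hq : |q| < 1) (n : ℕ) : qbinom q n 0 = 1 := by
  rw [qbinom, Nat.sub_zero, qPoch_zero, one_mul, div_self (qPoch_self_pos hq n).ne']

lemma qbinom_self {q : ℝ} (hq : |q| < 1) (n : ℕ) : qbinom q n n = 1 := by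
  rw [qbinom, Nat.sub_self, qPoch_zero, mul_one, div_self (qPoch_self_pos hq n).ne']

lemma qbinom_succ_succ_add_qbinom_succ {Q : ℝ} (hQ : |Q| < 1) {n k : ℕ} (hk : k ≤ n) :
    qbinom Q (n + 1) (k + 1) + qbinom Q (n + 1) k =
      qbinom Q (n + 2) (k + 1) + (1 - Q ^ (n + 1)) * qbinom Q n k := by
  obtain ⟨d, rfl⟩ := Nat.exists_eq_add_of_le hk
  simp only [qbinom, show k + d + 1 - (k + 1) = d by omega, show k + d + 1 - k = d + 1 by omega,
    show k + d + 2 - (k + 1) = d + 1 by omega, Nat.add_sub_cancel_left, qPoch_succ]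
  have := qPoch_self_pos hQ k
  have := qPoch_self_pos hQ d
  have := qPoch_self_pos hQ (k + d)
  have := one_sub_mul_pow_pos hQ k
  have := one_sub_mul_pow_pos hQ d
  field_simp
  ring

section qHermiteHom

variable {R : Type*} [CommRing R] [Algebra ℝ R]

/-- The continuous q-Hermite polynomial `H_n` as a homogeneous form: `H_n(cos θ | Q)` is
`qHermiteHom Q n (e^{iθ}) (e^{-iθ})`. -/
noncomputable def qHermiteHom (Q : ℝ) (n : ℕ) (x y : R) : R :=
  ∑ k ∈ range (n + 1), algebraMap ℝ R (qbinom Q n k) * x ^ (n - k) * y ^ k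

lemma qHermiteHom_zero {Q : ℝ} (hQ : |Q| < 1) (x y : R) : qHermiteHom Q 0 x y = 1 := by
  simp [qHermiteHom, qbinom_zero_right hQ]

lemma qHermiteHom_one {Q : ℝ} (hQ : |Q| < 1) (x y : R) : qHermiteHom Q 1 x y = x + y := by
  simp [qHermiteHom, sum_range_succ, qbinom_zero_right hQ, qbinom_self hQ]

lemma add_mul_qHermiteHom_succ {Q : ℝ} (hQ : |Q| < 1) (n : ℕ) (x y : R) :
    (x + y) * qHermiteHom Q (n + 1) x y =
      qHermiteHom Q (n + 2) x y +
        algebraMap ℝ R (1 - Q ^ (n + 1)) * (x * y) * qHermiteHom Q n x y := by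
  set c : ℕ → ℕ → R := fun n k => algebraMap ℝ R (qbinom Q n k)
  set T : ℕ → R := fun k => x ^ (n + 1 - k) * y ^ (k + 1)
  have hx : x * qHermiteHom Q (n + 1) x y =
      x ^ (n + 2) + ∑ k ∈ range (n + 1), c (n + 1) (k + 1) * T k := by
    rw [qHermiteHom, mul_sum, sum_range_succ', qbinom_zero_right hQ, add_comm]
    congr 1
    · simp [pow_succ']
    · refine sum_congr rfl fun k hk => ?_
      simp only [T, c, show n + 1 - (k + 1) = n - k by omega,
        show n + 1 - k = n - k + 1 by grind]
      ring
  have hy : y * qHermiteHom Q (n + 1) x y =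
      ∑ k ∈ range (n + 1), c (n + 1) k * T k + y ^ (n + 2) := by
    rw [qHermiteHom, mul_sum, sum_range_succ, qbinom_self hQ]
    simp only [Nat.sub_self, map_one, pow_zero, T, c]
    congr 1
    · exact sum_congr rfl fun k _ => by ring
    · ring
  have hS : qHermiteHom Q (n + 2) x y =
      ∑ k ∈ range (n + 1), c (n + 2) (k + 1) * T k + x ^ (n + 2) + y ^ (n + 2) := by
    rw [qHermiteHom, sum_range_succ, sum_range_succ', qbinom_zero_right hQ, qbinom_self hQ]
    simp only [Nat.sub_self, Nat.sub_zero, map_one, pow_zero, one_mul, mul_one, T, c]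
    congr 2
    exact sum_congr rfl fun k _ => by rw [show n + 2 - (k + 1) = n + 1 - k by omega]; ring
  have hxyS : x * y * qHermiteHom Q n x y = ∑ k ∈ range (n + 1), c n k * T k := by
    rw [qHermiteHom, mul_sum]
    refine sum_congr rfl fun k hk => ?_
    simp only [T, c, show n + 1 - k = n - k + 1 by grind]
    ring
  have hsum :
      ∑ k ∈ range (n + 1), c (n + 1) (k + 1) * T k +
        ∑ k ∈ range (n + 1), c (n + 1) k * T k =
      ∑ k ∈ range (n + 1), c (n + 2) (k + 1) * T k +
        algebraMap ℝ R (1 - Q ^ (n + 1)) * ∑ k ∈ range (n + 1), c n k * T k := by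
    rw [mul_sum, ← sum_add_distrib, ← sum_add_distrib]
    refine sum_congr rfl fun k hk => ?_
    have hPascal := qbinom_succ_succ_add_qbinom_succ hQ (Nat.lt_succ_iff.mp (mem_range.mp hk))
    rw [← add_mul, ← map_add, hPascal, map_add, map_mul]
    ring
  rw [add_mul, hx, hy, hS, mul_assoc, hxyS]
  linear_combination hsum

end qHermiteHom

lemma cpw_mul_cpw_neg (q : ℝ) (z : ℂ) : cpw q z * cpw q (-z) = 1 := by
  rw [cpw, cpw, ← Complex.exp_add, neg_mul, add_neg_cancel, Complex.exp_zero]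

lemma cpw_mul_natCast_sub_two_mul (q : ℝ) (z : ℂ) {n k : ℕ} (hk : k ≤ n) :
    cpw q (z * ((n : ℂ) - 2 * (k : ℂ))) = cpw q z ^ (n - k) * cpw q (-z) ^ k := by
  simp only [cpw, ← Complex.exp_nat_mul, ← Complex.exp_add, Nat.cast_sub hk]
  ring_nf

noncomputable def pfunScale (q : ℝ) (n : ℕ) : ℝ := q ^ n / √(qPoch (q ^ 2) (q ^ 2) n)

lemma pfun_eq_qHermiteHom (q : ℝ) (n : ℕ) (z : ℂ) :
    pfun q n z = pfunScale q n * qHermiteHom (q ^ 2) n (cpw q z) (cpw q (-z)) := by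
  rw [pfun, pfunScale, qHermiteHom]
  congr 1
  refine sum_congr rfl fun k hk => ?_
  rw [cpw_mul_natCast_sub_two_mul q z (by grind), Complex.coe_algebraMap, mul_assoc]

lemma pfunScale_succ_mul_sqrt {q : ℝ} (hq : |q| < 1) (n : ℕ) :
    pfunScale q (n + 1) * √(1 - q ^ (2 * (n + 1))) = q * pfunScale q n := by
  have hQ : |q ^ 2| < 1 := by rwa [abs_sq, sq_lt_one_iff_abs_lt_one]
  have hP := qPoch_self_pos hQ n
  have hf := one_sub_mul_pow_pos hQ n
  rw [pfunScale, pfunScale, qPoch_succ, Real.sqrt_mul hP.le, pow_mul, pow_succ' (q ^ 2)]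
  field_simp
  ring

lemma pfunScale_succ_mul_one_sub_pow {q : ℝ} (hq : |q| < 1) (n : ℕ) :
    pfunScale q (n + 1) * (1 - q ^ (2 * (n + 1))) =
      q * √(1 - q ^ (2 * (n + 1))) * pfunScale q n := by
  have hQ : |q ^ 2| < 1 := by rwa [abs_sq, sq_lt_one_iff_abs_lt_one]
  have hf : 0 ≤ 1 - q ^ (2 * (n + 1)) := by
    rw [pow_mul, pow_succ']
    exact (one_sub_mul_pow_pos hQ n).le
  linear_combination -pfunScale q (n + 1) * Real.mul_self_sqrt hf +
    √(1 - q ^ (2 * (n + 1))) * pfunScale_succ_mul_sqrt hq n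

theorem stmt5 (q : ℝ) (hq0 : 0 < q) (hq1 : q < 1) (z : ℂ) :
    (∀ n : ℕ, 1 ≤ n →
      (cpw q z + cpw q (-z)) * pfun q n z =
        ((q⁻¹ * Real.sqrt (1 - q ^ (2 * (n + 1))) : ℝ) : ℂ) * pfun q (n + 1) z +
          ((q * Real.sqrt (1 - q ^ (2 * n)) : ℝ) : ℂ) * pfun q (n - 1) z) ∧
    (cpw q z + cpw q (-z)) * pfun q 0 z =
      ((q⁻¹ * Real.sqrt (1 - q ^ 2) : ℝ) : ℂ) * pfun q 1 z := by
  have hq : |q| < 1 := abs_lt.2 ⟨by linarith, hq1⟩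
  have hQ : |q ^ 2| < 1 := by rwa [abs_sq, sq_lt_one_iff_abs_lt_one]
  set x := cpw q z
  set y := cpw q (-z)
  have hxy : x * y = 1 := cpw_mul_cpw_neg q z
  have hqq : (q : ℂ)⁻¹ * q = 1 := inv_mul_cancel₀ (by exact_mod_cast hq0.ne')
  have hp (n : ℕ) : pfun q n z = pfunScale q n * qHermiteHom (q ^ 2) n x y :=
    pfun_eq_qHermiteHom q n z
  have hc (n : ℕ) :
      (pfunScale q (n + 1) : ℂ) * (√(1 - q ^ (2 * (n + 1))) : ℝ) = q * pfunScale q n := by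
    exact_mod_cast pfunScale_succ_mul_sqrt hq n
  refine ⟨fun n hn => ?_, ?_⟩
  · obtain ⟨m, rfl⟩ := Nat.exists_eq_add_of_le' hn
    have hrec := add_mul_qHermiteHom_succ hQ m x y
    have hc' : (pfunScale q (m + 1) : ℂ) * (1 - (q : ℂ) ^ (2 * (m + 1))) =
        q * (√(1 - q ^ (2 * (m + 1))) : ℝ) * pfunScale q m := by
      exact_mod_cast pfunScale_succ_mul_one_sub_pow hq m
    rw [Complex.coe_algebraMap] at hrec
    rw [hp, hp, hp, Nat.add_sub_cancel]
    push_cast at hrec ⊢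
    set S : ℕ → ℂ := fun n => qHermiteHom (q ^ 2) n x y
    set P : ℕ → ℂ := fun n => pfunScale q n
    linear_combination P (m + 1) * hrec - (q : ℂ)⁻¹ * S (m + 2) * hc (m + 1)
      - P (m + 1) * S (m + 2) * hqq
      + P (m + 1) * (1 - (q : ℂ) ^ (2 * (m + 1))) * S m * hxy + S m * hc'
  · have h0 := hc 0
    rw [zero_add, mul_one] at h0
    rw [hp, hp, qHermiteHom_zero hQ, qHermiteHom_one hQ]
    push_cast
    linear_combination -(q : ℂ)⁻¹ * (x + y) * h0 - pfunScale q 0 * (x + y) * hqq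
end

section
/- Let q be a real number with 0 < q < 1 and let t ∈ ℝ with 0 < t < 0.3. With b_d(t) = μ_d(q^t + q^{−t}) / μ_d(q + q^{−1}), the series Σ_{d=0}^{∞} b_d(t)³ · μ_d(q + q^{−1})² converges. -/
/-!
For `a * b = 1` the Chebyshev recursion gives `μ_d(a + b) (a - b) = a^(d+1) - b^(d+1)`, so for
`a > 1` the value `μ_d(a + a⁻¹)` lies between `a^d` and `a^(d+1) / (a - a⁻¹)`. With `a = q⁻¹` and
`u = q^(-t)` the `d`-th term `μ_d(u + u⁻¹)³ / μ_d(a + a⁻¹)` is therefore at most a constant times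
`(u³ / a)^d = (q^(1 - 3t))^d`, a convergent geometric series because `3t < 1`.
-/

theorem mu_add_mul_sub {R : Type*} [CommRing R] {a b : R} (hab : a * b = 1) (d : ℕ) :
    mu d (a + b) * (a - b) = a ^ (d + 1) - b ^ (d + 1) := by
  induction d using Nat.twoStepInduction with
  | zero => simp [mu]
  | one => simp only [mu]; ring
  | more n ih₀ ih₁ =>
    simp only [mu]
    linear_combination (a + b) * ih₁ - ih₀ + (a ^ (n + 1) - b ^ (n + 1)) * hab

section OneLt

variable {a : ℝ} (ha : 1 < a)
include ha

theorem sub_inv_pos_of_one_lt : 0 < a - a⁻¹ :=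
  sub_pos.2 ((inv_lt_one_of_one_lt₀ ha).trans ha)

theorem pow_le_mu_add_inv (d : ℕ) : a ^ d ≤ mu d (a + a⁻¹) := by
  have ha₀ : 0 < a := by linarith
  rw [← mul_le_mul_iff_left₀ (sub_inv_pos_of_one_lt ha), mu_add_mul_sub (mul_inv_cancel₀ ha₀.ne')]
  have h₁ : a⁻¹ ^ (d + 1) ≤ a⁻¹ :=
    pow_le_of_le_one (inv_nonneg.2 ha₀.le) (inv_le_one_of_one_le₀ ha.le) d.succ_ne_zero
  have h₂ : a⁻¹ ≤ a ^ d * a⁻¹ :=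
    le_mul_of_one_le_left (inv_nonneg.2 ha₀.le) (one_le_pow₀ ha.le)
  have : a ^ d * (a - a⁻¹) = a ^ (d + 1) - a ^ d * a⁻¹ := by ring
  linarith

theorem mu_add_inv_le (d : ℕ) : mu d (a + a⁻¹) ≤ a ^ (d + 1) / (a - a⁻¹) := by
  have ha₀ : 0 < a := by linarith
  rw [le_div_iff₀ (sub_inv_pos_of_one_lt ha), mu_add_mul_sub (mul_inv_cancel₀ ha₀.ne')]
  have : 0 < a⁻¹ ^ (d + 1) := by positivity
  linarith

end OneLt

theorem summable_mu_div_cube_mul_sq {a u : ℝ} (ha : 1 < a) (hu : 1 < u) (hua : u ^ 3 < a) :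
    Summable (fun d : ℕ => (mu d (u + u⁻¹) / mu d (a + a⁻¹)) ^ 3 * mu d (a + a⁻¹) ^ 2) := by
  have ha₀ : 0 < a := by linarith
  have hu₀ : 0 < u := by linarith
  have hmu_a (d : ℕ) : 0 < mu d (a + a⁻¹) := (pow_pos ha₀ d).trans_le (pow_le_mu_add_inv ha d)
  have hmu_u (d : ℕ) : 0 < mu d (u + u⁻¹) := (pow_pos hu₀ d).trans_le (pow_le_mu_add_inv hu d)
  have hr : u ^ 3 / a < 1 := (div_lt_one ha₀).2 hua
  refine Summable.of_nonneg_of_le (fun d => by have := hmu_a d; have := hmu_u d; positivity)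
    (fun d => ?_) ((summable_geometric_of_lt_one (by positivity) hr).mul_left
      ((u / (u - u⁻¹)) ^ 3))
  have hgap := sub_inv_pos_of_one_lt hu
  calc (mu d (u + u⁻¹) / mu d (a + a⁻¹)) ^ 3 * mu d (a + a⁻¹) ^ 2
      = mu d (u + u⁻¹) ^ 3 / mu d (a + a⁻¹) := by field_simp [(hmu_a d).ne']
    _ ≤ (u ^ (d + 1) / (u - u⁻¹)) ^ 3 / a ^ d := by
      gcongr
      · exact (hmu_u d).le
      · exact mu_add_inv_le hu d
      · exact pow_le_mu_add_inv ha d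
    _ = (u / (u - u⁻¹)) ^ 3 * (u ^ 3 / a) ^ d := by
      rw [div_pow, div_pow, div_pow, ← pow_mul, ← pow_mul]
      field_simp
      ring

theorem stmt13 (q t : ℝ) (hq0 : 0 < q) (hq1 : q < 1) (ht0 : 0 < t) (ht1 : t < 0.3) :
    Summable (fun d : ℕ =>
      (mu d (q ^ t + q ^ (-t)) / mu d (q + q⁻¹)) ^ 3 * (mu d (q + q⁻¹)) ^ 2) := by
  have hq : 1 < q⁻¹ := one_lt_inv₀ hq0 |>.2 hq1
  have hu : 1 < q ^ (-t) := Real.one_lt_rpow_of_pos_of_lt_one_of_neg hq0 hq1 (by linarith)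
  have hua : (q ^ (-t)) ^ 3 < q⁻¹ := by
    rw [← Real.rpow_natCast, ← Real.rpow_mul hq0.le, ← Real.rpow_neg_one]
    exact Real.rpow_lt_rpow_of_exponent_gt hq0 hq1 (by norm_num at ht1 ⊢; linarith)
  have hsum := summable_mu_div_cube_mul_sq hq hu hua
  rwa [inv_inv, add_comm q⁻¹, Real.rpow_neg hq0.le, inv_inv, add_comm,
    ← Real.rpow_neg hq0.le] at hsum
end

section
/- Let c and N be real numbers with c ≥ 2 and N² > c + 2. Then the sequence d ↦ μ_d(N)² / μ_d(c) tends to infinity as d → ∞. -/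
open Filter Finset

theorem mu_add_inv_mul_pow {K : Type*} [Field K] {u : K} (hu : u ≠ 0) :
    ∀ n : ℕ, mu n (u + u⁻¹) * u ^ n = ∑ k ∈ range (n + 1), (u ^ 2) ^ k
  | 0 => by simp [mu]
  | 1 => by simp [mu, sum_range_succ]; field_simp; ring
  | n + 2 => by
    have h₁ := mu_add_inv_mul_pow hu (n + 1)
    have h₀ := mu_add_inv_mul_pow hu n
    rw [sum_range_succ _ (n + 1), ← h₀] at h₁
    rw [sum_range_succ _ (n + 2), sum_range_succ _ (n + 1), ← h₀, mu]
    linear_combination (u ^ 2 + 1) * h₁ +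
      mu (n + 1) (u + u⁻¹) * u ^ (n + 1) * mul_inv_cancel₀ hu

section Bounds

variable {u : ℝ}

theorem sq_pow_le_mu_sq (hu : 1 ≤ |u|) (n : ℕ) : (u ^ 2) ^ n ≤ mu n (u + u⁻¹) ^ 2 := by
  have hq : 1 ≤ u ^ 2 := (one_le_sq_iff_one_le_abs u).2 hu
  have hqn : 0 < (u ^ 2) ^ n := by positivity
  have hS : (u ^ 2) ^ n ≤ ∑ k ∈ range (n + 1), (u ^ 2) ^ k :=
    single_le_sum (fun k _ => by positivity) (self_mem_range_succ n)
  have hmu := mu_add_inv_mul_pow (abs_pos.1 (zero_lt_one.trans_le hu)) n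
  refine le_of_mul_le_mul_right ?_ hqn
  calc (u ^ 2) ^ n * (u ^ 2) ^ n ≤ (mu n (u + u⁻¹) * u ^ n) ^ 2 := by
        rw [hmu, ← sq]; gcongr
    _ = mu n (u + u⁻¹) ^ 2 * (u ^ 2) ^ n := by ring

theorem mu_le_succ_mul_pow (hu : 1 ≤ u) (n : ℕ) : mu n (u + u⁻¹) ≤ (n + 1) * u ^ n := by
  have hS : ∑ k ∈ range (n + 1), (u ^ 2) ^ k ≤ (n + 1) * (u ^ 2) ^ n := by
    simpa using sum_le_card_nsmul (range (n + 1)) _ _ fun k hk =>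
      pow_le_pow_right₀ (one_le_pow₀ hu) (mem_range_succ_iff.1 hk)
  refine le_of_mul_le_mul_right ?_ (by positivity : 0 < u ^ n)
  calc mu n (u + u⁻¹) * u ^ n ≤ (n + 1) * (u ^ 2) ^ n := by
        rwa [mu_add_inv_mul_pow (by positivity) n]
    _ = (n + 1) * u ^ n * u ^ n := by ring

theorem mu_add_inv_pos (hu : 0 < u) (n : ℕ) : 0 < mu n (u + u⁻¹) := by
  refine pos_of_mul_pos_left ?_ (by positivity : 0 ≤ u ^ n)
  rw [mu_add_inv_mul_pow hu.ne' n]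
  exact sum_pos (fun k _ => by positivity) nonempty_range_add_one

end Bounds

theorem exists_one_le_add_inv_eq {x : ℝ} (hx : 2 ≤ x) : ∃ u : ℝ, 1 ≤ u ∧ u + u⁻¹ = x := by
  refine ⟨Real.exp (Real.arcosh (x / 2)), Real.one_le_exp (Real.arcosh_nonneg (by linarith)), ?_⟩
  have := Real.cosh_arcosh (show 1 ≤ x / 2 by linarith)
  rw [Real.cosh_eq, Real.exp_neg] at this
  linarith

theorem exists_one_le_abs_add_inv_eq {x : ℝ} (hx : 2 ≤ |x|) :
    ∃ t : ℝ, 1 ≤ |t| ∧ t + t⁻¹ = x := by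
  rcases le_abs'.1 hx with hneg | hpos
  · obtain ⟨u, hu, hux⟩ := exists_one_le_add_inv_eq (le_neg.1 hneg)
    refine ⟨-u, by rwa [abs_neg, abs_of_nonneg (by linarith)], ?_⟩
    rw [inv_neg, ← neg_add, hux, neg_neg]
  · obtain ⟨u, hu, hux⟩ := exists_one_le_add_inv_eq hpos
    exact ⟨u, by rwa [abs_of_nonneg (by linarith)], hux⟩

theorem strictMonoOn_add_inv : StrictMonoOn (fun x : ℝ => x + x⁻¹) (Set.Ici 1) := by
  intro a (ha : 1 ≤ a) b (hb : 1 ≤ b) hab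
  show a + a⁻¹ < b + b⁻¹
  have hprod : 1 < a * b := by nlinarith
  have hdiff : b + b⁻¹ - (a + a⁻¹) = (b - a) * (a * b - 1) / (a * b) := by
    field_simp; ring
  have : 0 < (b - a) * (a * b - 1) / (a * b) := by apply div_pos <;> nlinarith
  linarith

theorem tendsto_pow_div_add_one_atTop {r : ℝ} (hr : 1 < r) :
    Tendsto (fun n : ℕ => r ^ n / (n + 1)) atTop atTop := by
  have h : Tendsto (fun n : ℕ => ((n : ℝ) + 1) / r ^ n) atTop (nhds 0) := by
    have := (isLittleO_coe_const_pow_of_one_lt (R := ℝ) hr).add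
      ((isLittleO_pow_const_const_pow_of_one_lt (R := ℝ) 0 hr).congr_left fun n => pow_zero _)
    exact this.tendsto_div_nhds_zero
  refine (tendsto_nhdsWithin_of_tendsto_nhds_of_eventually_within _ h
    (Eventually.of_forall fun n => ?_)).inv_tendsto_nhdsGT_zero.congr fun n => ?_
  · exact Set.mem_Ioi.2 (by positivity)
  · simp

theorem stmt15 (c N : ℝ) (hc : 2 ≤ c) (hN : c + 2 < N ^ 2) :
    Filter.Tendsto (fun d : ℕ => (mu d N) ^ 2 / mu d c) Filter.atTop Filter.atTop := by
  have hN₂ : 2 ≤ |N| := by simpa using sq_le_sq.1 (show (2 : ℝ) ^ 2 ≤ N ^ 2 by linarith)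
  obtain ⟨t, ht, rfl⟩ := exists_one_le_abs_add_inv_eq hN₂
  obtain ⟨s, hs, rfl⟩ := exists_one_le_add_inv_eq hc
  have hq : 1 ≤ t ^ 2 := (one_le_sq_iff_one_le_abs t).2 ht
  have hsq : s < t ^ 2 := by
    refine (strictMonoOn_add_inv.lt_iff_lt hs hq).1 ?_
    have : t ^ 2 + (t ^ 2)⁻¹ = (t + t⁻¹) ^ 2 - 2 := by
      have ht₀ : t ≠ 0 := abs_pos.1 (zero_lt_one.trans_le ht)
      field_simp
      ring
    linarith
  refine tendsto_atTop_mono (fun d => ?_)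
    (tendsto_pow_div_add_one_atTop ((one_lt_div (by linarith)).2 hsq))
  calc (t ^ 2 / s) ^ d / (d + 1) = (t ^ 2) ^ d / ((d + 1) * s ^ d) := by
        rw [div_pow, div_div, mul_comm]
    _ ≤ mu d (t + t⁻¹) ^ 2 / mu d (s + s⁻¹) :=
        div_le_div₀ (sq_nonneg _) (sq_pow_le_mu_sq ht d) (mu_add_inv_pos (by linarith) d)
          (mu_le_succ_mul_pow hs d)
end
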